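/- Consumption and production are characterized by the arrows: for every assertion a, state σ, and postcondition Q, consume(a)(σ) satisfies Q if and only if the angelic choice over all σ' with σ →[a]_c σ' of ⟨σ'⟩ satisfies Q, and produce(a)(σ) satisfies Q if and only if the demonic choice over all σ' with σ →[a]_p σ' of ⟨σ'⟩ satisfies Q. -/

import Mathlib

/- ## Outcomes, satisfaction, coverage, sequential composition -/

/-- An outcome over state space `S` with answers in `A`: a singleton, a demonic
choice over a family of outcomes, or an angelic choice over a family of outcomes. -/
inductive Outcome (S : Type) (A : Type) : Type 1 where
  | single (σ : S) (a : A)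
  | demonic (I : Type) (f : I → Outcome S A)
  | angelic (I : Type) (f : I → Outcome S A)

namespace Outcome

/-- Satisfaction of a postcondition by an outcome. -/
def sat {S A : Type} : Outcome S A → (S → A → Prop) → Prop
  | single σ a, Q => Q σ a
  | demonic _ f, Q => ∀ i, (f i).sat Q
  | angelic _ f, Q => ∃ i, (f i).sat Q

/-- Coverage of outcomes: `φ` covers `φ'` iff every postcondition satisfied by `φ`
is satisfied by `φ'`. -/
def cover {S A : Type} (φ φ' : Outcome S A) : Prop :=
  ∀ Q : S → A → Prop, φ.sat Q → φ'.sat Q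

/-- Sequential composition (with answers) of an outcome with an answer-indexed
family of mutators. -/
def bind {S A S' B : Type} : Outcome S A → (A → S → Outcome S' B) → Outcome S' B
  | single σ a, C => C a σ
  | demonic I f, C => demonic I (fun i => (f i).bind C)
  | angelic I f, C => angelic I (fun i => (f i).bind C)

end Outcome

/-- Failure: the angelic choice over zero alternatives. -/
def failO {S A : Type} : Outcome S A := .angelic PEmpty (fun x => x.elim)
/-- Nontermination: the demonic choice over zero alternatives. -/
def blockO {S A : Type} : Outcome S A := .demonic PEmpty (fun x => x.elim)
/-- Angelic guard: `⨁ P. φ`. -/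
def aguard {S A : Type} (P : Prop) (φ : Outcome S A) : Outcome S A :=
  .angelic (PLift P) (fun _ => φ)
/-- Demonic guard: `⨂ P. φ`. -/
def dguard {S A : Type} (P : Prop) (φ : Outcome S A) : Outcome S A :=
  .demonic (PLift P) (fun _ => φ)
/-- Binary demonic choice of outcomes. -/
def dchoiceO {S A : Type} (φ₁ φ₂ : Outcome S A) : Outcome S A :=
  .demonic Bool (fun t => if t then φ₁ else φ₂)

/-- Sequential composition of an answer-free outcome with a mutator: `φ; C`. -/
def oseq {S S' : Type} (φ : Outcome S Unit) (C : S → Outcome S' Unit) : Outcome S' Unit :=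
  φ.bind (fun _ => C)

/-- Sequential composition of mutators with answers: `x ← C; C'(x)`. -/
def mbind {S S' S'' A B : Type} (C : S → Outcome S' A) (C' : A → S' → Outcome S'' B) :
    S → Outcome S'' B :=
  fun σ => (C σ).bind C'

/-- Sequential composition `C; C'` where the first mutator is answer-free. -/
def mthen {S S' S'' A : Type} (C : S → Outcome S' Unit) (C' : S' → Outcome S'' A) :
    S → Outcome S'' A :=
  fun σ => (C σ).bind (fun _ => C')

/-- Side-effect-only sequential composition `C ;, C'`: run `C`, then `C'`, and keep
`C`'s answer. -/
def msideSeq {S S' S'' A : Type} (C : S → Outcome S' A) (C' : S' → Outcome S'' Unit) :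
    S → Outcome S'' A :=
  fun σ => (C σ).bind (fun a σ' => (C' σ').bind (fun _ σ'' => .single σ'' a))

/-- Coverage of mutators, lifted pointwise from coverage of outcomes. -/
def mcover {S S' A : Type} (C C' : S → Outcome S' A) : Prop :=
  ∀ σ, (C σ).cover (C' σ)

/-- Binary demonic choice of mutators. -/
def mdchoice {S S' A : Type} (C₁ C₂ : S → Outcome S' A) : S → Outcome S' A :=
  fun σ => dchoiceO (C₁ σ) (C₂ σ)

/- ## Syntax of the programming language and of assertions; semiconcrete states -/

/-- Integer expressions. -/
inductive IExp (V : Type) where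
  | lit (z : ℤ)
  | var (x : V)
  | add (e₁ e₂ : IExp V)
  | sub (e₁ e₂ : IExp V)

/-- Boolean expressions. -/
inductive BExp (V : Type) where
  | eq (e₁ e₂ : IExp V)
  | lt (e₁ e₂ : IExp V)
  | not (b : BExp V)

/-- Evaluation of an integer expression under a store. -/
def IExp.eval {V : Type} (s : V → ℤ) : IExp V → ℤ
  | .lit z => z
  | .var x => s x
  | .add e₁ e₂ => e₁.eval s + e₂.eval s
  | .sub e₁ e₂ => e₁.eval s - e₂.eval s

/-- Evaluation of a boolean expression under a store. -/
def BExp.eval {V : Type} (s : V → ℤ) : BExp V → Bool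
  | .eq e₁ e₂ => decide (e₁.eval s = e₂.eval s)
  | .lt e₁ e₂ => decide (e₁.eval s < e₂.eval s)
  | .not b => !(b.eval s)

/-- Predicate names: the built-in points-to and malloc-block predicates, plus
user-defined predicates drawn from `P`. -/
inductive PredName (P : Type) where
  | pts
  | mb
  | user (q : P)
deriving DecidableEq

/-- A chunk `p(v̄)`: a predicate name together with its integer arguments. -/
abbrev Chunk (P : Type) := PredName P × List ℤ

/-- A heap: a multiset of chunks. -/
abbrev Heap (P : Type) := Multiset (Chunk P)

/-- A (semiconcrete) state: a store paired with a heap. -/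
abbrev SCState (V P : Type) := (V → ℤ) × Heap P

/-- Function update `f[x := v]`. -/
def updF {V α : Type} [DecidableEq V] (s : V → α) (x : V) (v : α) : V → α :=
  fun y => if y = x then v else s y

/-- Function update by lists, `f[x̄ := v̄]`. -/
def updsF {V α : Type} [DecidableEq V] : (V → α) → List V → List α → (V → α)
  | s, [], _ => s
  | s, _ :: _, [] => s
  | s, x :: xs, v :: vs => updsF (updF s x v) xs vs

/-- Assertions: boolean expressions, predicate assertions with variable patterns,
separating conjunction, and conditional assertions. -/
inductive Assn (V P : Type) where
  | bexp (b : BExp V)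
  | pred (p : PredName P) (es : List (IExp V)) (xs : List V)
  | star (a₁ a₂ : Assn V P)
  | ite (b : BExp V) (a₁ a₂ : Assn V P)

/- ## Consumption and production arrows -/

/-- The consumption arrow `(s, h) →[a]_c (s', h')`. -/
inductive ConsArrow {V P : Type} [DecidableEq V] :
    SCState V P → Assn V P → SCState V P → Prop where
  | bexp {s : V → ℤ} {h : Heap P} {b : BExp V} :
      b.eval s = true → ConsArrow (s, h) (.bexp b) (s, h)
  | pred {s : V → ℤ} {h h' : Heap P} {p : PredName P} {es : List (IExp V)}
      {xs : List V} {vs : List ℤ} :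
      vs.length = xs.length →
      h = (p, es.map (IExp.eval s) ++ vs) ::ₘ h' →
      ConsArrow (s, h) (.pred p es xs) (updsF s xs vs, h')
  | star {σ σ' σ'' : SCState V P} {a₁ a₂ : Assn V P} :
      ConsArrow σ a₁ σ' → ConsArrow σ' a₂ σ'' → ConsArrow σ (.star a₁ a₂) σ''
  | iteTrue {s : V → ℤ} {h : Heap P} {b : BExp V} {a₁ a₂ : Assn V P} {σ' : SCState V P} :
      b.eval s = true → ConsArrow (s, h) a₁ σ' → ConsArrow (s, h) (.ite b a₁ a₂) σ'
  | iteFalse {s : V → ℤ} {h : Heap P} {b : BExp V} {a₁ a₂ : Assn V P} {σ' : SCState V P} :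
      b.eval s = false → ConsArrow (s, h) a₂ σ' → ConsArrow (s, h) (.ite b a₁ a₂) σ'

/-- The production arrow `(s, h) →[a]_p (s', h')`. -/
inductive ProdArrow {V P : Type} [DecidableEq V] :
    SCState V P → Assn V P → SCState V P → Prop where
  | bexp {s : V → ℤ} {h : Heap P} {b : BExp V} :
      b.eval s = true → ProdArrow (s, h) (.bexp b) (s, h)
  | pred {s : V → ℤ} {h h' : Heap P} {p : PredName P} {es : List (IExp V)}
      {xs : List V} {vs : List ℤ} :
      vs.length = xs.length →
      h' = (p, es.map (IExp.eval s) ++ vs) ::ₘ h →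
      ProdArrow (s, h) (.pred p es xs) (updsF s xs vs, h')
  | star {σ σ' σ'' : SCState V P} {a₁ a₂ : Assn V P} :
      ProdArrow σ a₁ σ' → ProdArrow σ' a₂ σ'' → ProdArrow σ (.star a₁ a₂) σ''
  | iteTrue {s : V → ℤ} {h : Heap P} {b : BExp V} {a₁ a₂ : Assn V P} {σ' : SCState V P} :
      b.eval s = true → ProdArrow (s, h) a₁ σ' → ProdArrow (s, h) (.ite b a₁ a₂) σ'
  | iteFalse {s : V → ℤ} {h : Heap P} {b : BExp V} {a₁ a₂ : Assn V P} {σ' : SCState V P} :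
      b.eval s = false → ProdArrow (s, h) a₂ σ' → ProdArrow (s, h) (.ite b a₁ a₂) σ'

/- ## Semiconcrete auxiliary mutators; assertion consumption and production -/

/-- `assume(b)`: blocks unless `b` evaluates to true. -/
def assumeB {V P : Type} (b : BExp V) : SCState V P → Outcome (SCState V P) Unit :=
  fun σ => dguard (b.eval σ.1 = true) (.single σ ())

/-- `assert(b)`: fails unless `b` evaluates to true. -/
def assertB {V P : Type} (b : BExp V) : SCState V P → Outcome (SCState V P) Unit :=
  fun σ => aguard (b.eval σ.1 = true) (.single σ ())

/-- Semiconcrete consumption of a multiset of chunks. -/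
def consumeChunks {V P : Type} [DecidableEq P] (h' : Heap P) :
    SCState V P → Outcome (SCState V P) Unit :=
  fun σ => aguard (h' ≤ σ.2) (.single (σ.1, σ.2 - h') ())

/-- Semiconcrete consumption of a single chunk. -/
def consumeChunk {V P : Type} [DecidableEq P] (α : Chunk P) :
    SCState V P → Outcome (SCState V P) Unit :=
  consumeChunks (α ::ₘ 0)

/-- Semiconcrete production of a multiset of chunks. -/
def produceChunks {V P : Type} (h' : Heap P) :
    SCState V P → Outcome (SCState V P) Unit :=
  fun σ => .single (σ.1, σ.2 + h') ()

/-- Semiconcrete production of a single chunk. -/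
def produceChunk {V P : Type} (α : Chunk P) :
    SCState V P → Outcome (SCState V P) Unit :=
  produceChunks (α ::ₘ 0)

/-- The leak check: fails if the heap is nonempty, blocks otherwise. -/
def leakcheck {V P : Type} : SCState V P → Outcome (SCState V P) Unit :=
  fun σ => aguard (σ.2 = 0) blockO

/-- The mutator that answers the current store. -/
def storeM {V P : Type} : SCState V P → Outcome (SCState V P) (V → ℤ) :=
  fun σ => .single σ σ.1

/-- `with(s', C)`: run `C` under store `s'`, then restore the original store,
answering `C`'s answer. -/
def withS {V P A : Type} (s' : V → ℤ) (C : SCState V P → Outcome (SCState V P) A) :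
    SCState V P → Outcome (SCState V P) A :=
  fun σ => (C (s', σ.2)).bind (fun a σ' => .single (σ.1, σ'.2) a)

/-- The mutator that does nothing. -/
def noop {V P : Type} : SCState V P → Outcome (SCState V P) Unit :=
  fun σ => .single σ ()

/-- Consumption of an assertion. -/
def consume {V P : Type} [DecidableEq V] [DecidableEq P] :
    Assn V P → SCState V P → Outcome (SCState V P) Unit
  | .bexp b => assertB b
  | .pred p es xs => fun σ =>
      .angelic {vs : List ℤ // vs.length = xs.length} (fun vs =>
        (consumeChunk (p, es.map (IExp.eval σ.1) ++ vs.1) σ).bind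
          (fun _ σ' => .single (updsF σ'.1 xs vs.1, σ'.2) ()))
  | .star a₁ a₂ => mthen (consume a₁) (consume a₂)
  | .ite b a₁ a₂ =>
      mdchoice (mthen (assumeB b) (consume a₁)) (mthen (assumeB (.not b)) (consume a₂))

/-- Production of an assertion. -/
def produce {V P : Type} [DecidableEq V] [DecidableEq P] :
    Assn V P → SCState V P → Outcome (SCState V P) Unit
  | .bexp b => assumeB b
  | .pred p es xs => fun σ =>
      .demonic {vs : List ℤ // vs.length = xs.length} (fun vs =>
        (produceChunk (p, es.map (IExp.eval σ.1) ++ vs.1) σ).bind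
          (fun _ σ' => .single (updsF σ'.1 xs vs.1, σ'.2) ()))
  | .star a₁ a₂ => mthen (produce a₁) (produce a₂)
  | .ite b a₁ a₂ =>
      mdchoice (mthen (assumeB b) (produce a₁)) (mthen (assumeB (.not b)) (produce a₂))

/-- Satisfaction of a bind, as satisfaction of the first outcome with a derived
postcondition. -/
theorem Outcome.sat_bind {S A S' B : Type} (φ : Outcome S A)
    (C : A → S → Outcome S' B) (Q : S' → B → Prop) :
    (φ.bind C).sat Q ↔ φ.sat (fun σ a => (C a σ).sat Q) := by
  induction φ with
  | single σ a => exact Iff.rfl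
  | demonic I f ih => simp only [Outcome.bind, Outcome.sat, ih]
  | angelic I f ih => simp only [Outcome.bind, Outcome.sat, ih]

theorem consume_sat {V P : Type} [DecidableEq V] [DecidableEq P] (a : Assn V P) :
    ∀ (σ : SCState V P) (Q : SCState V P → Unit → Prop),
    (consume a σ).sat Q ↔ ∃ σ', ConsArrow σ a σ' ∧ Q σ' () := by
  induction a with
  | bexp b =>
    rintro ⟨s, h⟩ Q
    simp only [consume, assertB, aguard, Outcome.sat]
    constructor
    · rintro ⟨⟨hb⟩, hq⟩
      exact ⟨(s, h), .bexp hb, hq⟩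
    · rintro ⟨σ', hc, hq⟩
      cases hc with
      | bexp hb => exact ⟨⟨hb⟩, hq⟩
  | pred p es xs =>
    rintro ⟨s, h⟩ Q
    simp only [consume, consumeChunk, consumeChunks, aguard, Outcome.sat,
      Outcome.sat_bind, Outcome.bind]
    constructor
    · rintro ⟨⟨vs, hlen⟩, ⟨hle⟩, hq⟩
      have hmem : (p, es.map (IExp.eval s) ++ vs) ∈ h := by
        simpa using hle
      refine ⟨_, ConsArrow.pred hlen ?_, hq⟩
      show h = _ ::ₘ (h - _)
      rw [show ((p, es.map (IExp.eval s) ++ vs) ::ₘ (0 : Heap P))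
          = ({(p, es.map (IExp.eval s) ++ vs)} : Multiset _) from rfl,
        Multiset.sub_singleton, Multiset.cons_erase hmem]
    · rintro ⟨σ', hc, hq⟩
      cases hc with
      | pred hlen heq =>
        rename_i h' vs
        subst heq
        refine ⟨⟨vs, hlen⟩, ⟨?_⟩, ?_⟩
        · simp
        · have : ((p, es.map (IExp.eval s) ++ vs) ::ₘ h')
              - ((p, es.map (IExp.eval s) ++ vs) ::ₘ 0) = h' := by
            rw [show ((p, es.map (IExp.eval s) ++ vs) ::ₘ (0 : Heap P))
                = ({(p, es.map (IExp.eval s) ++ vs)} : Multiset _) from rfl,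
              Multiset.sub_singleton, Multiset.erase_cons_head]
          rw [this]
          exact hq
  | star a₁ a₂ ih₁ ih₂ =>
    intro σ Q
    simp only [consume, mthen, Outcome.sat_bind]
    rw [ih₁]
    constructor
    · rintro ⟨σ', h1, h2⟩
      rw [ih₂] at h2
      obtain ⟨σ'', h2, hq⟩ := h2
      exact ⟨σ'', .star h1 h2, hq⟩
    · rintro ⟨σ'', hc, hq⟩
      cases hc with
      | star h1 h2 => exact ⟨_, h1, (ih₂ _ _).2 ⟨_, h2, hq⟩⟩
  | ite b a₁ a₂ ih₁ ih₂ =>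
    rintro ⟨s, h⟩ Q
    simp only [consume, mdchoice, dchoiceO, mthen, assumeB, dguard, Outcome.sat,
      Outcome.sat_bind, BExp.eval, Bool.forall_bool, if_true, if_false,
      Bool.not_eq_true']
    constructor
    · rintro ⟨hf, ht⟩
      cases hb : b.eval s with
      | true =>
        obtain ⟨σ', h1, hq⟩ := (ih₁ _ _).1 (ht ⟨hb⟩)
        exact ⟨σ', .iteTrue hb h1, hq⟩
      | false =>
        obtain ⟨σ', h2, hq⟩ := (ih₂ _ _).1 (hf ⟨by simpa using hb⟩)
        exact ⟨σ', .iteFalse hb h2, hq⟩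
    · rintro ⟨σ', hc, hq⟩
      cases hc with
      | iteTrue hb h1 =>
        exact ⟨fun ⟨hb'⟩ => absurd hb (by simp_all),
          fun _ => (ih₁ _ _).2 ⟨σ', h1, hq⟩⟩
      | iteFalse hb h2 =>
        exact ⟨fun _ => (ih₂ _ _).2 ⟨σ', h2, hq⟩,
          fun ⟨hb'⟩ => absurd hb (by simp [hb'])⟩

theorem produce_sat {V P : Type} [DecidableEq V] [DecidableEq P] (a : Assn V P) :
    ∀ (σ : SCState V P) (Q : SCState V P → Unit → Prop),
    (produce a σ).sat Q ↔ ∀ σ', ProdArrow σ a σ' → Q σ' () := by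
  induction a with
  | bexp b =>
    rintro ⟨s, h⟩ Q
    simp only [produce, assumeB, dguard, Outcome.sat]
    constructor
    · rintro hsat σ' hc
      cases hc with
      | bexp hb => exact hsat ⟨hb⟩
    · rintro hall ⟨hb⟩
      exact hall _ (.bexp hb)
  | pred p es xs =>
    rintro ⟨s, h⟩ Q
    simp only [produce, produceChunk, produceChunks, Outcome.sat,
      Outcome.sat_bind, Outcome.bind]
    have hadd : ∀ vs : List ℤ,
        h + ((p, es.map (IExp.eval s) ++ vs) ::ₘ 0)
          = (p, es.map (IExp.eval s) ++ vs) ::ₘ h := by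
      intro vs
      rw [add_comm]
      simp [Multiset.cons_add]
    constructor
    · rintro hsat σ' hc
      cases hc with
      | pred hlen heq =>
        rename_i vs
        subst heq
        have := hsat ⟨vs, hlen⟩
        rwa [hadd] at this
    · rintro hall ⟨vs, hlen⟩
      have := hall _ (ProdArrow.pred hlen rfl)
      rwa [hadd]
  | star a₁ a₂ ih₁ ih₂ =>
    intro σ Q
    simp only [produce, mthen, Outcome.sat_bind]
    rw [ih₁]
    constructor
    · rintro hsat σ'' hc
      cases hc with
      | star h1 h2 => exact (ih₂ _ _).1 (hsat _ h1) _ h2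
    · intro hall σ' h1
      rw [ih₂]
      intro σ'' h2
      exact hall _ (.star h1 h2)
  | ite b a₁ a₂ ih₁ ih₂ =>
    rintro ⟨s, h⟩ Q
    simp only [produce, mdchoice, dchoiceO, mthen, assumeB, dguard, Outcome.sat,
      Outcome.sat_bind, BExp.eval, Bool.forall_bool, if_true, if_false,
      Bool.not_eq_true']
    constructor
    · rintro ⟨hf, ht⟩ σ' hc
      cases hc with
      | iteTrue hb h1 => exact (ih₁ _ _).1 (ht ⟨hb⟩) _ h1
      | iteFalse hb h2 => exact (ih₂ _ _).1 (hf ⟨by simpa using hb⟩) _ h2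
    · intro hall
      refine ⟨fun ⟨hb⟩ => (ih₂ _ _).2 fun σ' h2 => hall _ (.iteFalse (by simpa using hb) h2),
        fun ⟨hb⟩ => (ih₁ _ _).2 fun σ' h1 => hall _ (.iteTrue hb h1)⟩

/-- consumption and production are characterized by the consumption and
production arrows: consumption is the angelic choice over all arrow-successors, and
production is the demonic choice over all arrow-successors. -/
theorem consume_produce_arrows {V P : Type} [DecidableEq V] [DecidableEq P]
    (a : Assn V P) (σ : SCState V P) (Q : SCState V P → Unit → Prop) :
    ((consume a σ).sat Q ↔
      (Outcome.angelic {σ' : SCState V P // ConsArrow σ a σ'}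
        (fun σ' => .single σ'.1 ())).sat Q) ∧
    ((produce a σ).sat Q ↔
      (Outcome.demonic {σ' : SCState V P // ProdArrow σ a σ'}
        (fun σ' => .single σ'.1 ())).sat Q) := by
  constructor
  · rw [consume_sat]
    constructor
    · rintro ⟨σ', hc, hq⟩
      exact ⟨⟨σ', hc⟩, hq⟩
    · rintro ⟨⟨σ', hc⟩, hq⟩
      exact ⟨σ', hc, hq⟩
  · rw [produce_sat]
    constructor
    · exact fun hall i => hall i.1 i.2
    · exact fun hsat σ' hc => hsat ⟨σ', hc⟩
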